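/- Let Ω ⊆ ℝ³ be open, u = (u₁,u₂,u₃) : Ω → ℝ³ a C¹ vector field with u₁ ≠ 0 on Ω, and μ : Ω → ℝ a function such that curl u = μ·u on Ω (the vorticity is parallel to the velocity). Set β₂ = u₂/u₁, β₃ = u₃/u₁, G = 1 + β₂² + β₃², and W = ∂₂β₃ − ∂₃β₂ + β₃∂₁β₂ − β₂∂₁β₃. Then W = μ·G on Ω; in particular, for any positive function ρ on Ω, W/(ρG) = μ/ρ. -/

import Mathlib

open Real Set MeasureTheory

/-- The `i`-th partial derivative of a function on `ℝ³`. -/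
noncomputable def pd (i : Fin 3) (f : (Fin 3 → ℝ) → ℝ) (x : Fin 3 → ℝ) : ℝ :=
  fderiv ℝ f x (Pi.single i 1)

/-- The slope `β₂ = u₂/u₁`. -/
noncomputable def beta2 (u1 u2 : (Fin 3 → ℝ) → ℝ) : (Fin 3 → ℝ) → ℝ :=
  fun x => u2 x / u1 x

/-- The slope `β₃ = u₃/u₁`. -/
noncomputable def beta3 (u1 u3 : (Fin 3 → ℝ) → ℝ) : (Fin 3 → ℝ) → ℝ :=
  fun x => u3 x / u1 x

/-- `G = 1 + β₂² + β₃²`. -/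
noncomputable def Gfun (u1 u2 u3 : (Fin 3 → ℝ) → ℝ) : (Fin 3 → ℝ) → ℝ :=
  fun x => 1 + (beta2 u1 u2 x) ^ 2 + (beta3 u1 u3 x) ^ 2

/-- `W = ∂₂β₃ − ∂₃β₂ + β₃∂₁β₂ − β₂∂₁β₃`. -/
noncomputable def Wfun (u1 u2 u3 : (Fin 3 → ℝ) → ℝ) : (Fin 3 → ℝ) → ℝ :=
  fun x => pd 1 (beta3 u1 u3) x - pd 2 (beta2 u1 u2) x
    + beta3 u1 u3 x * pd 0 (beta2 u1 u2) x - beta2 u1 u2 x * pd 0 (beta3 u1 u3) x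

/-! Clearing the denominator `u₁²`, the quotient rule turns `W` into the helicity density
`u · curl u` and `G` into `|u|²`; for a Beltrami field `u · curl u = μ |u|²`. -/

theorem fderiv_div_apply {𝕜 E : Type*} [NontriviallyNormedField 𝕜] [NormedAddCommGroup E]
    [NormedSpace 𝕜 E] {f g : E → 𝕜} {x : E} (hf : DifferentiableAt 𝕜 f x)
    (hg : DifferentiableAt 𝕜 g x) (hx : g x ≠ 0) (v : E) :
    fderiv 𝕜 (fun y => f y / g y) x v
      = (fderiv 𝕜 f x v * g x - f x * fderiv 𝕜 g x v) / g x ^ 2 := by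
  have h : HasFDerivAt (fun y => f y * (g y)⁻¹) _ x :=
    hf.hasFDerivAt.mul ((hasFDerivAt_inv' hx).comp x hg.hasFDerivAt)
  simp only [div_eq_mul_inv, h.fderiv, add_apply, smul_apply, neg_apply,
    ContinuousLinearMap.comp_apply, ContinuousLinearMap.mulLeftRight_apply, smul_eq_mul]
  field_simp
  ring

theorem pd_div (i : Fin 3) {f g : (Fin 3 → ℝ) → ℝ} {x : Fin 3 → ℝ}
    (hf : DifferentiableAt ℝ f x) (hg : DifferentiableAt ℝ g x) (hx : g x ≠ 0) :
    pd i (fun y => f y / g y) x = (pd i f x * g x - f x * pd i g x) / g x ^ 2 :=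
  fderiv_div_apply hf hg hx _

theorem Wfun_mul_sq {u1 u2 u3 : (Fin 3 → ℝ) → ℝ} {x : Fin 3 → ℝ}
    (hd1 : DifferentiableAt ℝ u1 x) (hd2 : DifferentiableAt ℝ u2 x)
    (hd3 : DifferentiableAt ℝ u3 x) (hx : u1 x ≠ 0) :
    Wfun u1 u2 u3 x * u1 x ^ 2
      = u1 x * (pd 1 u3 x - pd 2 u2 x) + u2 x * (pd 2 u1 x - pd 0 u3 x)
        + u3 x * (pd 0 u2 x - pd 1 u1 x) := by
  have hβ2 (i : Fin 3) : pd i (beta2 u1 u2) x = _ := pd_div i hd2 hd1 hx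
  have hβ3 (i : Fin 3) : pd i (beta3 u1 u3) x = _ := pd_div i hd3 hd1 hx
  simp only [Wfun, hβ2, hβ3, beta2, beta3]
  field_simp
  ring

theorem Gfun_mul_sq {u1 u2 u3 : (Fin 3 → ℝ) → ℝ} {x : Fin 3 → ℝ} (hx : u1 x ≠ 0) :
    Gfun u1 u2 u3 x * u1 x ^ 2 = u1 x ^ 2 + u2 x ^ 2 + u3 x ^ 2 := by
  simp only [Gfun, beta2, beta3]
  field_simp

theorem Gfun_pos (u1 u2 u3 : (Fin 3 → ℝ) → ℝ) (x : Fin 3 → ℝ) : 0 < Gfun u1 u2 u3 x := by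
  unfold Gfun
  positivity

/-- For a Beltrami field (`curl u = μ u`) with `u₁ ≠ 0` one has `W = μ G`; in particular
`W/(ρG) = μ/ρ` for any positive function `ρ`. -/
theorem beltrami_W_eq_mu_G
    (Ω : Set (Fin 3 → ℝ)) (hΩ : IsOpen Ω)
    (u1 u2 u3 μ : (Fin 3 → ℝ) → ℝ)
    (hu1 : ContDiffOn ℝ 1 u1 Ω) (hu2 : ContDiffOn ℝ 1 u2 Ω) (hu3 : ContDiffOn ℝ 1 u3 Ω)
    (hu1ne : ∀ x ∈ Ω, u1 x ≠ 0)
    (hcurl : ∀ x ∈ Ω,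
      pd 1 u3 x - pd 2 u2 x = μ x * u1 x
        ∧ pd 2 u1 x - pd 0 u3 x = μ x * u2 x
        ∧ pd 0 u2 x - pd 1 u1 x = μ x * u3 x) :
    (∀ x ∈ Ω, Wfun u1 u2 u3 x = μ x * Gfun u1 u2 u3 x)
      ∧ ∀ ρ : (Fin 3 → ℝ) → ℝ, (∀ x ∈ Ω, 0 < ρ x) →
          ∀ x ∈ Ω, Wfun u1 u2 u3 x / (ρ x * Gfun u1 u2 u3 x) = μ x / ρ x := by
  have hW : ∀ x ∈ Ω, Wfun u1 u2 u3 x = μ x * Gfun u1 u2 u3 x := by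
    intro x hx
    have hdiff {f : (Fin 3 → ℝ) → ℝ} (hf : ContDiffOn ℝ 1 f Ω) : DifferentiableAt ℝ f x :=
      (hf.differentiableOn one_ne_zero).differentiableAt (hΩ.mem_nhds hx)
    obtain ⟨h1, h2, h3⟩ := hcurl x hx
    have hsq : u1 x ^ 2 ≠ 0 := pow_ne_zero 2 (hu1ne x hx)
    apply mul_right_cancel₀ hsq
    rw [Wfun_mul_sq (hdiff hu1) (hdiff hu2) (hdiff hu3) (hu1ne x hx), mul_assoc,
      Gfun_mul_sq (hu1ne x hx), h1, h2, h3]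
    ring
  refine ⟨hW, fun ρ _ x hx => ?_⟩
  rw [hW x hx, mul_div_mul_right _ _ (Gfun_pos u1 u2 u3 x).ne']
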